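/- arXiv:2206.12570 — 4 statements merged into one kernel-verified Lean document; each statement's English description precedes it below -/
import Mathlib

section
/- Let $1 \le q_0, q_1 < \infty$, $w_0 \in A_{q_0}$, $w_1 \in A_{q_1}$, and $\theta \in [0,1]$. Define $q$ by $\frac1q = \frac{1-\theta}{q_0} + \frac{\theta}{q_1}$ and the weight $w$ by $w^{1/q} = w_0^{(1-\theta)/q_0} w_1^{\theta/q_1}$. Then $w \in A_q$ with $[w]_{A_q} \le [w_0]_{A_{q_0}}^{(1-\theta)q/q_0} [w_1]_{A_{q_1}}^{\theta q/q_1}$. -/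
/-!
On a cube `Q` with normalized Lebesgue measure `μ_Q`, the `A_p` quantity of `w` is
`‖w‖_{L¹(μ_Q)} · ‖w⁻¹‖_{L^{1/(p-1)}(μ_Q)}`, with `1/0 = ∞` giving the `A_1` quantity. Put
`a = (1-θ)q/q₀` and `b = θq/q₁`, so that `w = w₀^a w₁^b`, `a + b = 1` and
`q - 1 = a (q₀ - 1) + b (q₁ - 1)`. Hölder's inequality with exponents `r₀/a` and `r₁/b` gives
`‖f^a g^b‖_r ≤ ‖f‖_{r₀}^a ‖g‖_{r₁}^b` whenever `1/r = a/r₀ + b/r₁`; applied once to `w₀, w₁` in `L¹`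
and once to `w₀⁻¹, w₁⁻¹`, it bounds both factors, and taking the supremum over cubes gives the
estimate.
-/

open MeasureTheory ENNReal

noncomputable section

/-- A (closed, axis-parallel) cube in `ℝⁿ`. -/
def IsCube {n : ℕ} (Q : Set (Fin n → ℝ)) : Prop :=
  ∃ (c : Fin n → ℝ) (r : ℝ), 0 < r ∧ Q = {x | ∀ i, |x i - c i| ≤ r}

/-- Average `⨍_Q w` of an `ℝ≥0∞`-valued function over a set. -/
def avgE {n : ℕ} (Q : Set (Fin n → ℝ)) (w : (Fin n → ℝ) → ℝ≥0∞) : ℝ≥0∞ :=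
  (∫⁻ x in Q, w x) / volume Q

/-- The `A_p` constant, `1 < p < ∞`. -/
def apSup {n : ℕ} (p : ℝ) (w : (Fin n → ℝ) → ℝ≥0∞) : ℝ≥0∞ :=
  ⨆ (Q : Set (Fin n → ℝ)) (_ : IsCube Q),
    avgE Q w * (avgE Q fun x => w x ^ (-(1 / (p - 1)))) ^ (p - 1)

/-- The `A_1` constant. -/
def a1Const {n : ℕ} (w : (Fin n → ℝ) → ℝ≥0∞) : ℝ≥0∞ :=
  ⨆ (Q : Set (Fin n → ℝ)) (_ : IsCube Q),
    avgE Q w * essSup (fun x => (w x)⁻¹) (volume.restrict Q)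

/-- The Muckenhoupt `A_p` constant for `1 ≤ p < ∞`. -/
def apConst {n : ℕ} (p : ℝ) (w : (Fin n → ℝ) → ℝ≥0∞) : ℝ≥0∞ :=
  if p = 1 then a1Const w else apSup p w

/-- The `A_∞` constant, `[w]_{A_∞} = inf_{p>1} [w]_{A_p}`. -/
def aInftyConst {n : ℕ} (w : (Fin n → ℝ) → ℝ≥0∞) : ℝ≥0∞ :=
  ⨅ (p : ℝ) (_ : 1 < p), apConst p w

/-- The reverse Hölder constant, `1 ≤ s < ∞`. -/
def rhConst {n : ℕ} (s : ℝ) (w : (Fin n → ℝ) → ℝ≥0∞) : ℝ≥0∞ :=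
  ⨆ (Q : Set (Fin n → ℝ)) (_ : IsCube Q),
    (avgE Q fun x => w x ^ s) ^ (1 / s) / avgE Q w

/-- The reverse Hölder constant for an exponent `s ∈ [1,∞]`. -/
def rhConstE {n : ℕ} (s : ℝ≥0∞) (w : (Fin n → ℝ) → ℝ≥0∞) : ℝ≥0∞ :=
  if s = ∞ then
    ⨆ (Q : Set (Fin n → ℝ)) (_ : IsCube Q),
      essSup w (volume.restrict Q) / avgE Q w
  else rhConst s.toReal w

/-- A weight on `ℝⁿ`: measurable, positive and finite a.e. -/
def IsWeight {n : ℕ} (w : (Fin n → ℝ) → ℝ≥0∞) : Prop :=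
  Measurable w ∧ ∀ᵐ x ∂(volume : Measure (Fin n → ℝ)), 0 < w x ∧ w x < ∞

/-- The conjugate exponent `p' = p/(p-1)` of a real exponent. -/
def rconj (p : ℝ) : ℝ := p / (p - 1)

/-- The conjugate exponent of an extended-real exponent, with `1' = ∞`, `∞' = 1`. -/
def econj (p : ℝ≥0∞) : ℝ≥0∞ :=
  if p = ∞ then 1 else if p ≤ 1 then ∞ else ENNReal.ofReal (p.toReal / (p.toReal - 1))

/-- The limited-range exponent `τ_p = (𝔭₊/p)'(p/𝔭₋ - 1) + 1`. -/
def tauExp (pm : ℝ) (pp : ℝ≥0∞) (p : ℝ) : ℝ :=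
  (econj (pp / ENNReal.ofReal p)).toReal * (p / pm - 1) + 1

namespace MeasureTheory
variable {α : Type*} {m : MeasurableSpace α} {μ : Measure α} {f g : α → ℝ≥0∞}

theorem eLpNorm_rpow_le {a : ℝ} (ha : 0 ≤ a) (r : ℝ≥0∞) :
    eLpNorm (fun x => f x ^ a) (r / ENNReal.ofReal a) μ ≤ eLpNorm f r μ ^ a := by
  rcases ha.eq_or_lt with rfl | ha
  · rcases eq_or_ne r 0 with rfl | hr
    · simp
    simp only [rpow_zero, ofReal_zero, div_zero hr, eLpNorm_exponent_top]
    exact eLpNormEssSup_le_of_ae_enorm_bound (by simp)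
  · simpa only [enorm_eq_self, ENNReal.div_mul_cancel (ofReal_pos.2 ha).ne' ofReal_ne_top]
      using (eLpNorm_enorm_rpow (μ := μ) (p := r / ENNReal.ofReal a) f ha).le

theorem eLpNorm_toReal_of_ae_ne_top (hf : ∀ᵐ x ∂μ, f x ≠ ∞) (p : ℝ≥0∞) :
    eLpNorm (fun x => (f x).toReal) p μ = eLpNorm f p μ :=
  eLpNorm_congr_enorm_ae (hf.mono fun _ hx => by simp [hx])

theorem eLpNorm_mul_le_of_ae_ne_top {p q r : ℝ≥0∞} [HolderTriple p q r]
    (hf : AEMeasurable f μ) (hg : AEMeasurable g μ)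
    (hf_fin : ∀ᵐ x ∂μ, f x ≠ ∞) (hg_fin : ∀ᵐ x ∂μ, g x ≠ ∞) :
    eLpNorm (f * g) r μ ≤ eLpNorm f p μ * eLpNorm g q μ := by
  have fg_fin : ∀ᵐ x ∂μ, (f * g) x ≠ ∞ := by
    filter_upwards [hf_fin, hg_fin] with x hfx hgx using mul_ne_top hfx hgx
  have := eLpNorm_le_eLpNorm_mul_eLpNorm_of_nnnorm (μ := μ) (p := p) (q := q) (r := r)
    hf.ennreal_toReal.aestronglyMeasurable hg.ennreal_toReal.aestronglyMeasurable (· * ·) 1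
    (.of_forall fun x => by simp [nnnorm_mul])
  simpa only [← toReal_mul, ← Pi.mul_apply f g, one_mul, ENNReal.coe_one,
    eLpNorm_toReal_of_ae_ne_top hf_fin, eLpNorm_toReal_of_ae_ne_top hg_fin,
    eLpNorm_toReal_of_ae_ne_top fg_fin] using this

theorem eLpNorm_rpow_mul_rpow_le (hf : AEMeasurable f μ) (hg : AEMeasurable g μ)
    (hf_fin : ∀ᵐ x ∂μ, f x ≠ ∞) (hg_fin : ∀ᵐ x ∂μ, g x ≠ ∞) {a b : ℝ} (ha : 0 ≤ a) (hb : 0 ≤ b)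
    {r r₀ r₁ : ℝ≥0∞} (hr₀ : r₀ ≠ 0) (hr₁ : r₁ ≠ 0)
    (hr : r⁻¹ = ENNReal.ofReal a * r₀⁻¹ + ENNReal.ofReal b * r₁⁻¹) :
    eLpNorm (fun x => f x ^ a * g x ^ b) r μ ≤ eLpNorm f r₀ μ ^ a * eLpNorm g r₁ μ ^ b := by
  have holder : HolderTriple (r₀ / ENNReal.ofReal a) (r₁ / ENNReal.ofReal b) r :=
    ⟨by rw [ENNReal.inv_div (.inl ofReal_ne_top) (.inr hr₀),
      ENNReal.inv_div (.inl ofReal_ne_top) (.inr hr₁), hr, div_eq_mul_inv, div_eq_mul_inv]⟩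
  have rpow_fin {h : α → ℝ≥0∞} {c : ℝ} (hc : 0 ≤ c) (h_fin : ∀ᵐ x ∂μ, h x ≠ ∞) :
      ∀ᵐ x ∂μ, h x ^ c ≠ ∞ := h_fin.mono fun _ hx => rpow_ne_top_of_nonneg hc hx
  calc eLpNorm (fun x => f x ^ a * g x ^ b) r μ
      ≤ eLpNorm (fun x => f x ^ a) (r₀ / ENNReal.ofReal a) μ
        * eLpNorm (fun x => g x ^ b) (r₁ / ENNReal.ofReal b) μ :=
        eLpNorm_mul_le_of_ae_ne_top (hf.pow_const a) (hg.pow_const b)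
          (rpow_fin ha hf_fin) (rpow_fin hb hg_fin)
    _ ≤ eLpNorm f r₀ μ ^ a * eLpNorm g r₁ μ ^ b :=
        mul_le_mul' (eLpNorm_rpow_le ha r₀) (eLpNorm_rpow_le hb r₁)

/-- On the normalized volume of a cube this is the `A_p` quantity of the cube: the dual exponent
`(ofReal (p - 1))⁻¹ = 1 / (p - 1)` is `∞` at `p = 1`, where the second factor is `ess sup w⁻¹`. -/
def apChar (p : ℝ) (w : α → ℝ≥0∞) (μ : Measure α) : ℝ≥0∞ :=
  eLpNorm w 1 μ * eLpNorm w⁻¹ (ENNReal.ofReal (p - 1))⁻¹ μ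

theorem apChar_rpow_mul_rpow_le {w₀ w₁ : α → ℝ≥0∞} (h₀ : AEMeasurable w₀ μ)
    (h₁ : AEMeasurable w₁ μ) (hpos₀ : ∀ᵐ x ∂μ, 0 < w₀ x ∧ w₀ x < ∞)
    (hpos₁ : ∀ᵐ x ∂μ, 0 < w₁ x ∧ w₁ x < ∞) {p₀ p₁ a b : ℝ} (hp₀ : 1 ≤ p₀) (hp₁ : 1 ≤ p₁)
    (ha : 0 ≤ a) (hb : 0 ≤ b) (hab : a + b = 1) :
    apChar (a * p₀ + b * p₁) (fun x => w₀ x ^ a * w₁ x ^ b) μ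
      ≤ apChar p₀ w₀ μ ^ a * apChar p₁ w₁ μ ^ b := by
  have fin_of_pos {w : α → ℝ≥0∞} (hw : ∀ᵐ x ∂μ, 0 < w x ∧ w x < ∞) : ∀ᵐ x ∂μ, w x ≠ ∞ :=
    hw.mono fun _ hx => hx.2.ne
  have inv_fin_of_pos {w : α → ℝ≥0∞} (hw : ∀ᵐ x ∂μ, 0 < w x ∧ w x < ∞) :
      ∀ᵐ x ∂μ, (w x)⁻¹ ≠ ∞ :=
    hw.mono fun _ hx => ENNReal.inv_ne_top.2 hx.1.ne'
  have h_one : eLpNorm (fun x => w₀ x ^ a * w₁ x ^ b) 1 μ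
      ≤ eLpNorm w₀ 1 μ ^ a * eLpNorm w₁ 1 μ ^ b :=
    eLpNorm_rpow_mul_rpow_le h₀ h₁ (fin_of_pos hpos₀) (fin_of_pos hpos₁) ha hb one_ne_zero
      one_ne_zero (by rw [inv_one, mul_one, mul_one, ← ofReal_add ha hb, hab, ofReal_one])
  have h_inv : (fun x => w₀ x ^ a * w₁ x ^ b)⁻¹ =ᵐ[μ] fun x => (w₀ x)⁻¹ ^ a * (w₁ x)⁻¹ ^ b := by
    filter_upwards [hpos₀, hpos₁] with x hx₀ hx₁
    rw [Pi.inv_apply, ENNReal.mul_inv (.inr (rpow_ne_top_of_nonneg hb hx₁.2.ne))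
      (.inl (rpow_ne_top_of_nonneg ha hx₀.2.ne)), ENNReal.inv_rpow, ENNReal.inv_rpow]
  have h_dual : eLpNorm (fun x => w₀ x ^ a * w₁ x ^ b)⁻¹ (ENNReal.ofReal (a * p₀ + b * p₁ - 1))⁻¹ μ
      ≤ eLpNorm w₀⁻¹ (ENNReal.ofReal (p₀ - 1))⁻¹ μ ^ a
        * eLpNorm w₁⁻¹ (ENNReal.ofReal (p₁ - 1))⁻¹ μ ^ b := by
    rw [eLpNorm_congr_ae h_inv]
    refine eLpNorm_rpow_mul_rpow_le h₀.inv h₁.inv (inv_fin_of_pos hpos₀) (inv_fin_of_pos hpos₁)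
      ha hb (by simp) (by simp) ?_
    rw [inv_inv, inv_inv, inv_inv, ← ofReal_mul ha, ← ofReal_mul hb,
      ← ofReal_add (mul_nonneg ha (sub_nonneg.2 hp₀)) (mul_nonneg hb (sub_nonneg.2 hp₁))]
    congr 1
    linear_combination hab
  calc apChar (a * p₀ + b * p₁) (fun x => w₀ x ^ a * w₁ x ^ b) μ
      ≤ (eLpNorm w₀ 1 μ ^ a * eLpNorm w₁ 1 μ ^ b)
        * (eLpNorm w₀⁻¹ (ENNReal.ofReal (p₀ - 1))⁻¹ μ ^ a
          * eLpNorm w₁⁻¹ (ENNReal.ofReal (p₁ - 1))⁻¹ μ ^ b) := mul_le_mul' h_one h_dual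
    _ = apChar p₀ w₀ μ ^ a * apChar p₁ w₁ μ ^ b := by
      rw [apChar, apChar, mul_rpow_of_nonneg _ _ ha, mul_rpow_of_nonneg _ _ hb,
        mul_mul_mul_comm]

end MeasureTheory

def normalizedVolume {n : ℕ} (Q : Set (Fin n → ℝ)) : Measure (Fin n → ℝ) :=
  (volume Q)⁻¹ • volume.restrict Q

section Cube
variable {n : ℕ} {Q : Set (Fin n → ℝ)}

theorem IsCube.volume_ne_top (hQ : IsCube Q) : volume Q ≠ ∞ := by
  obtain ⟨c, r, hr, rfl⟩ := hQ
  refine ((measure_mono fun x hx => ?_ : _ ≤ volume (Metric.closedBall c r)).trans_lt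
    measure_closedBall_lt_top).ne
  exact (dist_pi_le_iff hr.le).2 fun i => (Real.dist_eq _ _).trans_le (hx i)

theorem lintegral_normalizedVolume (Q : Set (Fin n → ℝ)) (f : (Fin n → ℝ) → ℝ≥0∞) :
    ∫⁻ x, f x ∂normalizedVolume Q = avgE Q f := by
  rw [avgE, normalizedVolume, lintegral_smul_measure, smul_eq_mul, ENNReal.div_eq_inv_mul]

theorem avgE_eq_eLpNorm_one (Q : Set (Fin n → ℝ)) (w : (Fin n → ℝ) → ℝ≥0∞) :
    avgE Q w = eLpNorm w 1 (normalizedVolume Q) := by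
  simp only [eLpNorm_one_eq_lintegral_enorm, enorm_eq_self, lintegral_normalizedVolume]

theorem essSup_inv_eq_eLpNorm_top (hQ : IsCube Q) (w : (Fin n → ℝ) → ℝ≥0∞) :
    essSup (fun x => (w x)⁻¹) (volume.restrict Q) = eLpNorm w⁻¹ ∞ (normalizedVolume Q) := by
  rw [eLpNorm_exponent_top, eLpNormEssSup, normalizedVolume,
    essSup_ennreal_smul_measure (ENNReal.inv_ne_zero.2 hQ.volume_ne_top)]
  rfl

theorem avgE_rpow_neg_eq_eLpNorm {p : ℝ} (hp : 1 < p) (Q : Set (Fin n → ℝ))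
    (w : (Fin n → ℝ) → ℝ≥0∞) :
    (avgE Q fun x => w x ^ (-(1 / (p - 1)))) ^ (p - 1)
      = eLpNorm w⁻¹ (ENNReal.ofReal (p - 1))⁻¹ (normalizedVolume Q) := by
  have hp' : 0 < p - 1 := sub_pos.2 hp
  rw [eLpNorm_eq_lintegral_rpow_enorm_toReal (by simp) (by simpa using hp'), toReal_inv,
    toReal_ofReal hp'.le, lintegral_normalizedVolume]
  simp only [one_div, inv_inv, Pi.inv_apply, enorm_eq_self, ENNReal.inv_rpow, ENNReal.rpow_neg]

theorem normalizedVolume_absolutelyContinuous (Q : Set (Fin n → ℝ)) :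
    normalizedVolume Q ≪ volume :=
  Measure.absolutelyContinuous_restrict.smul_left _

theorem apConst_eq_iSup_apChar {p : ℝ} (hp : 1 ≤ p) (w : (Fin n → ℝ) → ℝ≥0∞) :
    apConst p w = ⨆ (Q : Set (Fin n → ℝ)) (_ : IsCube Q), apChar p w (normalizedVolume Q) := by
  rcases hp.eq_or_lt with rfl | hp
  · rw [apConst, if_pos rfl, a1Const]
    refine iSup_congr fun Q => iSup_congr fun hQ => ?_
    rw [apChar, sub_self, ofReal_zero, inv_zero, avgE_eq_eLpNorm_one,
      essSup_inv_eq_eLpNorm_top hQ]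
  · rw [apConst, if_neg hp.ne', apSup]
    refine iSup_congr fun Q => iSup_congr fun _ => ?_
    rw [apChar, avgE_eq_eLpNorm_one, avgE_rpow_neg_eq_eLpNorm hp]

end Cube

theorem IsWeight.ae_normalizedVolume {n : ℕ} {w : (Fin n → ℝ) → ℝ≥0∞} (hw : IsWeight w)
    (Q : Set (Fin n → ℝ)) : ∀ᵐ x ∂normalizedVolume Q, 0 < w x ∧ w x < ∞ :=
  normalizedVolume_absolutelyContinuous Q |>.ae_le hw.2

theorem apConst_rpow_mul_rpow_le {n : ℕ} {p₀ p₁ a b : ℝ} (hp₀ : 1 ≤ p₀) (hp₁ : 1 ≤ p₁)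
    (ha : 0 ≤ a) (hb : 0 ≤ b) (hab : a + b = 1) {w₀ w₁ : (Fin n → ℝ) → ℝ≥0∞}
    (hw₀ : IsWeight w₀) (hw₁ : IsWeight w₁) :
    apConst (a * p₀ + b * p₁) (fun x => w₀ x ^ a * w₁ x ^ b)
      ≤ apConst p₀ w₀ ^ a * apConst p₁ w₁ ^ b := by
  have hp : 1 ≤ a * p₀ + b * p₁ := by nlinarith
  rw [apConst_eq_iSup_apChar hp, apConst_eq_iSup_apChar hp₀, apConst_eq_iSup_apChar hp₁]
  refine iSup₂_le fun Q hQ => (apChar_rpow_mul_rpow_le hw₀.1.aemeasurable hw₁.1.aemeasurable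
    (hw₀.ae_normalizedVolume Q) (hw₁.ae_normalizedVolume Q) hp₀ hp₁ ha hb hab).trans ?_
  gcongr <;> exact le_iSup₂ (f := fun Q (_ : IsCube Q) => apChar _ _ (normalizedVolume Q)) Q hQ

/-- Interpolation of Muckenhoupt classes: if `w₀ ∈ A_{q₀}`, `w₁ ∈ A_{q₁}`,
`θ ∈ [0,1]`, `1/q = (1-θ)/q₀ + θ/q₁` and `w^{1/q} = w₀^{(1-θ)/q₀} w₁^{θ/q₁}`, then `w ∈ A_q`
with `[w]_{A_q} ≤ [w₀]_{A_{q₀}}^{(1-θ)q/q₀} [w₁]_{A_{q₁}}^{θ q/q₁}`. -/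
theorem statement1 {n : ℕ} (q₀ q₁ q θ : ℝ) (hq₀ : 1 ≤ q₀) (hq₁ : 1 ≤ q₁)
    (hθ : θ ∈ Set.Icc (0:ℝ) 1)
    (w₀ w₁ w : (Fin n → ℝ) → ℝ≥0∞) (hw₀ : IsWeight w₀) (hw₁ : IsWeight w₁)
    (hA₀ : apConst q₀ w₀ ≠ ∞) (hA₁ : apConst q₁ w₁ ≠ ∞)
    (hq : 1 / q = (1 - θ) / q₀ + θ / q₁)
    (hw : ∀ x, w x = (w₀ x ^ ((1 - θ) / q₀) * w₁ x ^ (θ / q₁)) ^ q) :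
    apConst q w ≠ ∞ ∧
    apConst q w ≤ apConst q₀ w₀ ^ ((1 - θ) * q / q₀) * apConst q₁ w₁ ^ (θ * q / q₁) := by
  obtain ⟨hθ₀, hθ₁⟩ := hθ
  have hq_pos : 0 < q := by
    refine one_div_pos.1 (hq ▸ ?_)
    rcases hθ₁.lt_or_eq with hθ | rfl
    · exact add_pos_of_pos_of_nonneg (div_pos (sub_pos.2 hθ) (by linarith))
        (div_nonneg hθ₀ (by linarith))
    · simpa using zero_lt_one.trans_le hq₁
  have ha : 0 ≤ (1 - θ) * q / q₀ :=
    div_nonneg (mul_nonneg (sub_nonneg.2 hθ₁) hq_pos.le) (by linarith)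
  have hb : 0 ≤ θ * q / q₁ := div_nonneg (mul_nonneg hθ₀ hq_pos.le) (by linarith)
  have hab : (1 - θ) * q / q₀ + θ * q / q₁ = 1 :=
    calc (1 - θ) * q / q₀ + θ * q / q₁ = q * ((1 - θ) / q₀ + θ / q₁) := by ring
      _ = 1 := by rw [← hq, mul_one_div_cancel hq_pos.ne']
  have hq_eq : (1 - θ) * q / q₀ * q₀ + θ * q / q₁ * q₁ = q := by
    field_simp
    ring
  have hw_eq : (fun x => w₀ x ^ ((1 - θ) * q / q₀) * w₁ x ^ (θ * q / q₁)) = w := by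
    funext x
    rw [hw x, mul_rpow_of_nonneg _ _ hq_pos.le, ← rpow_mul, ← rpow_mul]
    ring_nf
  have hle := apConst_rpow_mul_rpow_le hq₀ hq₁ ha hb hab hw₀ hw₁
  rw [hq_eq, hw_eq] at hle
  exact ⟨ne_top_of_le_ne_top (mul_ne_top (rpow_ne_top_of_nonneg ha hA₀)
    (rpow_ne_top_of_nonneg hb hA₁)) hle, hle⟩
end
end

section
/- Let $1 \le p_0 < p < \infty$, $u \in A_p$, and $v \in A_1$. Then $u^{(p_0-1)/(p-1)} v^{(p-p_0)/(p-1)} \in A_{p_0}$ with $[u^{(p_0-1)/(p-1)} v^{(p-p_0)/(p-1)}]_{A_{p_0}} \le [u]_{A_p}^{(p_0-1)/(p-1)} [v]_{A_1}^{(p-p_0)/(p-1)}$. -/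
/-!
On each cube, Hölder's inequality with exponents `1/θ` and `1/δ`, `θ = (p₀-1)/(p-1)`,
`δ = (p-p₀)/(p-1)`, bounds the average of `w = u^θ v^δ` by `⟨u⟩^θ ⟨v⟩^δ`. For the dual weight
`w^{-1/(p₀-1)} = u^{-1/(p-1)} (v⁻¹)^{δ/(p₀-1)}` the factor `v⁻¹` is bounded by its essential
supremum on the cube, and raising to the power `p₀ - 1 = θ (p - 1)` the pieces regroup into the
`A_p` expression of `u` to the power `θ` times the `A_1` expression of `v` to the power `δ`.
-/

open MeasureTheory ENNReal

noncomputable section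

def apCube {n : ℕ} (p : ℝ) (w : (Fin n → ℝ) → ℝ≥0∞) (Q : Set (Fin n → ℝ)) : ℝ≥0∞ :=
  avgE Q w * (avgE Q fun x => w x ^ (-(1 / (p - 1)))) ^ (p - 1)

def a1Cube {n : ℕ} (w : (Fin n → ℝ) → ℝ≥0∞) (Q : Set (Fin n → ℝ)) : ℝ≥0∞ :=
  avgE Q w * essSup (fun x => (w x)⁻¹) (volume.restrict Q)

section

variable {n : ℕ} {Q : Set (Fin n → ℝ)}

theorem apCube_le_apSup (p : ℝ) (w : (Fin n → ℝ) → ℝ≥0∞) (hQ : IsCube Q) :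
    apCube p w Q ≤ apSup p w :=
  le_iSup₂ (f := fun Q (_ : IsCube Q) => apCube p w Q) Q hQ

theorem a1Cube_le_a1Const (w : (Fin n → ℝ) → ℝ≥0∞) (hQ : IsCube Q) :
    a1Cube w Q ≤ a1Const w :=
  le_iSup₂ (f := fun Q (_ : IsCube Q) => a1Cube w Q) Q hQ

theorem avgE_le_const_mul {f g : (Fin n → ℝ) → ℝ≥0∞} {c : ℝ≥0∞}
    (hfg : ∀ᵐ x ∂volume.restrict Q, f x ≤ c * g x) (hg : AEMeasurable g (volume.restrict Q)) :
    avgE Q f ≤ c * avgE Q g := by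
  rw [avgE, avgE, ← mul_div_assoc, ← lintegral_const_mul'' c hg]
  gcongr ?_ / _
  exact lintegral_mono_ae hfg

theorem avgE_rpow_mul_rpow_le {f g : (Fin n → ℝ) → ℝ≥0∞} (hf : AEMeasurable f)
    (hg : AEMeasurable g) {θ δ : ℝ} (hθ : 0 ≤ θ) (hδ : 0 ≤ δ) (hθδ : θ + δ = 1) :
    avgE Q (fun x => f x ^ θ * g x ^ δ) ≤ avgE Q f ^ θ * avgE Q g ^ δ := by
  set V := (volume Q)⁻¹
  calc avgE Q (fun x => f x ^ θ * g x ^ δ)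
      ≤ (∫⁻ x in Q, f x) ^ θ * (∫⁻ x in Q, g x) ^ δ * V := by
        rw [avgE, div_eq_mul_inv]
        gcongr
        exact lintegral_mul_norm_pow_le hf.restrict hg.restrict hθ hδ hθδ
    _ = avgE Q f ^ θ * avgE Q g ^ δ := by
        rw [avgE, avgE, div_eq_mul_inv, div_eq_mul_inv, mul_rpow_of_nonneg _ _ hθ,
          mul_rpow_of_nonneg _ _ hδ]
        conv_lhs => rw [← rpow_one V, ← hθδ, rpow_add_of_nonneg _ _ hθ hδ]
        ring

end

theorem ENNReal.rpow_mul_rpow_rpow_neg {a b : ℝ≥0∞} (ha : a ≠ ∞) (hb : b ≠ ∞) {θ δ : ℝ}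
    (hθ : 0 ≤ θ) (hδ : 0 ≤ δ) (s : ℝ) :
    (a ^ θ * b ^ δ) ^ (-s) = a ^ (-(θ * s)) * b⁻¹ ^ (δ * s) := by
  rw [mul_rpow_of_ne_top (rpow_ne_top_of_nonneg hθ ha) (rpow_ne_top_of_nonneg hδ hb),
    ← rpow_mul, ← rpow_mul, inv_rpow, ← rpow_neg, mul_neg, mul_neg]

section

variable {n : ℕ} {p₀ p θ δ : ℝ} {u v : (Fin n → ℝ) → ℝ≥0∞}

theorem apCube_rpow_mul_rpow_le (hp₀ : 1 < p₀) (hθ : 0 ≤ θ) (hδ : 0 ≤ δ) (hθδ : θ + δ = 1)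
    (hp : p₀ - 1 = θ * (p - 1)) (hu : IsWeight u) (hv : IsWeight v) (Q : Set (Fin n → ℝ)) :
    apCube p₀ (fun x => u x ^ θ * v x ^ δ) Q ≤ apCube p u Q ^ θ * a1Cube v Q ^ δ := by
  set E := essSup (fun x => (v x)⁻¹) (volume.restrict Q)
  set σ : (Fin n → ℝ) → ℝ≥0∞ := fun x => u x ^ (-(1 / (p - 1)))
  have hp₀1 : 0 < p₀ - 1 := by linarith
  have hp1 : p - 1 ≠ 0 := by rintro h; rw [h, mul_zero] at hp; linarith
  have hθ0 : θ ≠ 0 := by rintro rfl; rw [zero_mul] at hp; linarith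
  have hdual_exp : θ * (1 / (p₀ - 1)) = 1 / (p - 1) := by
    rw [hp]; field_simp
  have hdual : ∀ᵐ x ∂volume.restrict Q,
      (u x ^ θ * v x ^ δ) ^ (-(1 / (p₀ - 1))) ≤ E ^ (δ * (1 / (p₀ - 1))) * σ x := by
    have hfin := ae_restrict_of_ae (s := Q) (hu.2.and hv.2)
    filter_upwards [hfin, ENNReal.ae_le_essSup (fun x => (v x)⁻¹)] with x hx hxE
    rw [ENNReal.rpow_mul_rpow_rpow_neg hx.1.2.ne hx.2.2.ne hθ hδ, hdual_exp, mul_comm]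
    exact mul_le_mul' (rpow_le_rpow hxE (by positivity)) le_rfl
  calc apCube p₀ (fun x => u x ^ θ * v x ^ δ) Q
      ≤ (avgE Q u ^ θ * avgE Q v ^ δ) * (E ^ (δ * (1 / (p₀ - 1))) * avgE Q σ) ^ (p₀ - 1) := by
        rw [apCube]
        gcongr
        · exact avgE_rpow_mul_rpow_le hu.1.aemeasurable hv.1.aemeasurable hθ hδ hθδ
        · exact avgE_le_const_mul hdual (hu.1.pow_const _).aemeasurable
    _ = (avgE Q u * avgE Q σ ^ (p - 1)) ^ θ * (avgE Q v * E) ^ δ := by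
        rw [mul_rpow_of_nonneg _ _ hp₀1.le, ← rpow_mul, mul_assoc δ,
          one_div_mul_cancel hp₀1.ne', mul_one, hp, mul_comm θ, rpow_mul,
          mul_rpow_of_nonneg _ _ hθ, mul_rpow_of_nonneg _ _ hδ]
        ring

theorem apSup_rpow_mul_rpow_le (hp₀ : 1 < p₀) (hθ : 0 ≤ θ) (hδ : 0 ≤ δ) (hθδ : θ + δ = 1)
    (hp : p₀ - 1 = θ * (p - 1)) (hu : IsWeight u) (hv : IsWeight v) :
    apSup p₀ (fun x => u x ^ θ * v x ^ δ) ≤ apSup p u ^ θ * a1Const v ^ δ :=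
  iSup₂_le fun Q hQ => (apCube_rpow_mul_rpow_le hp₀ hθ hδ hθδ hp hu hv Q).trans <| by
    gcongr
    exacts [apCube_le_apSup p u hQ, a1Cube_le_a1Const v hQ]

end

/-- If `1 ≤ p₀ < p < ∞`, `u ∈ A_p`, `v ∈ A_1`, then
`u^{(p₀-1)/(p-1)} v^{(p-p₀)/(p-1)} ∈ A_{p₀}` with constant at most
`[u]_{A_p}^{(p₀-1)/(p-1)} [v]_{A_1}^{(p-p₀)/(p-1)}`. -/
theorem statement2 {n : ℕ} (p₀ p : ℝ) (hp₀ : 1 ≤ p₀) (hp₀p : p₀ < p)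
    (u v : (Fin n → ℝ) → ℝ≥0∞) (hu : IsWeight u) (hv : IsWeight v)
    (huA : apConst p u ≠ ∞) (hvA : apConst 1 v ≠ ∞) :
    apConst p₀ (fun x => u x ^ ((p₀ - 1)/(p - 1)) * v x ^ ((p - p₀)/(p - 1))) ≠ ∞ ∧
    apConst p₀ (fun x => u x ^ ((p₀ - 1)/(p - 1)) * v x ^ ((p - p₀)/(p - 1))) ≤
      apConst p u ^ ((p₀ - 1)/(p - 1)) * apConst 1 v ^ ((p - p₀)/(p - 1)) := by
  have hp1 : 0 < p - 1 := by linarith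
  rcases hp₀.eq_or_lt with rfl | hp₀1
  · simp only [sub_self, zero_div, div_self hp1.ne', rpow_zero, rpow_one, one_mul]
    exact ⟨hvA, le_rfl⟩
  have hθ : 0 ≤ (p₀ - 1) / (p - 1) := div_nonneg (by linarith) hp1.le
  have hδ : 0 ≤ (p - p₀) / (p - 1) := div_nonneg (by linarith) hp1.le
  have hθδ : (p₀ - 1) / (p - 1) + (p - p₀) / (p - 1) = 1 := by field_simp; ring
  have hp : p₀ - 1 = (p₀ - 1) / (p - 1) * (p - 1) := (div_mul_cancel₀ _ hp1.ne').symm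
  have key := apSup_rpow_mul_rpow_le hp₀1 hθ hδ hθδ hp hu hv
  simp only [apConst, if_neg hp₀1.ne', if_neg (hp₀1.trans hp₀p).ne', if_true] at huA hvA ⊢
  exact ⟨ne_top_of_le_ne_top (mul_ne_top (rpow_ne_top_of_nonneg hθ huA)
    (rpow_ne_top_of_nonneg hδ hvA)) key, key⟩
end
end

section
/- Let $1 \le p < \infty$ and $1 < s \le \infty$. If $w_1, w_2 \in A_1$, then the weight $w := w_1^{1/s} w_2^{1-p}$ belongs to $A_p \cap RH_s$, and moreover $\max\{[w]_{A_p}, [w]_{RH_s}\} \le [w_1]_{A_1}^{1/s} [w_2]_{A_1}^{p-1}$. -/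
open MeasureTheory ENNReal

noncomputable section

/-!
On a cube `Q` put `aᵢ = ⨍_Q wᵢ` and `mᵢ = ess sup_Q wᵢ⁻¹`, so that `aᵢ mᵢ ≤ [wᵢ]_{A_1}`.
Pointwise, `w₂^{1-p} ≤ m₂^{p-1}` and `w₁^{1/s} ≥ m₁^{-1/s}`; the remaining averages are handled by
Jensen's inequality, `⨍ w₁^θ ≤ a₁^θ` for `θ ≤ 1` and `⨍ w₂^{1-p} ≥ a₂^{1-p}`. In each of the
`A_p` and `RH_s` quotients this leaves `(m₂^{p-1} a₁^{1/s}) (m₁^{1/s} a₂^{p-1}) =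
(a₁ m₁)^{1/s} (a₂ m₂)^{p-1}`. Since averages over `Q` are integrals against the probability
measure `volume[|Q]`, all these estimates hold on an arbitrary probability space.
-/

open ProbabilityTheory

section Jensen

variable {Ω : Type*} [MeasurableSpace Ω] {μ : Measure Ω} [IsProbabilityMeasure μ]
  {f : Ω → ℝ≥0∞}

theorem lintegral_rpow_le_rpow_lintegral (hf : AEMeasurable f μ) {θ : ℝ} (hθ₀ : 0 ≤ θ)
    (hθ₁ : θ ≤ 1) : ∫⁻ x, f x ^ θ ∂μ ≤ (∫⁻ x, f x ∂μ) ^ θ := by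
  rcases hθ₀.eq_or_lt with rfl | hθ
  · simp
  have h := eLpNorm'_le_eLpNorm'_of_exponent_le hθ hθ₁ μ hf.aestronglyMeasurable
  simp only [eLpNorm', enorm_eq_self, ENNReal.rpow_one, div_one] at h
  calc ∫⁻ x, f x ^ θ ∂μ = ((∫⁻ x, f x ^ θ ∂μ) ^ (1 / θ)) ^ θ := by
        rw [← ENNReal.rpow_mul, one_div_mul_cancel hθ.ne', ENNReal.rpow_one]
    _ ≤ (∫⁻ x, f x ∂μ) ^ θ := ENNReal.rpow_le_rpow h hθ₀

theorem one_le_rpow_lintegral_mul_lintegral_rpow_neg (hf : AEMeasurable f μ)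
    (hf_pos : ∀ᵐ x ∂μ, 0 < f x ∧ f x < ∞) {β : ℝ} (hβ₀ : 0 ≤ β) :
    1 ≤ (∫⁻ x, f x ∂μ) ^ β * ∫⁻ x, f x ^ (-β) ∂μ := by
  rcases hβ₀.eq_or_lt with rfl | hβ
  · simp
  -- Hölder with exponents `(1+β)/β` and `1+β` applied to `1 = f^(β/(1+β)) * f^(-β/(1+β))`.
  have hβ₁ : 0 < 1 + β := by linarith
  set θ := β / (1 + β) with hθ
  have hθβ : θ * (1 + β) = β := by rw [hθ]; field_simp
  have hconj : ((1 + β) / β).HolderConjugate (1 + β) := by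
    rw [Real.holderConjugate_iff]
    exact ⟨by rw [lt_div_iff₀ hβ]; linarith, by field_simp; ring⟩
  have hH := ENNReal.lintegral_mul_le_Lp_mul_Lq μ hconj (hf.pow_const θ) (hf.pow_const (-θ))
  have hone : ∫⁻ x, ((fun x => f x ^ θ) * fun x => f x ^ (-θ)) x ∂μ = 1 := by
    rw [lintegral_congr_ae (g := fun _ => 1), lintegral_const, measure_univ, one_mul]
    filter_upwards [hf_pos] with x hx
    simp [← ENNReal.rpow_add _ _ hx.1.ne' hx.2.ne]
  simp only [hone, ← ENNReal.rpow_mul] at hH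
  rw [show θ * ((1 + β) / β) = 1 by rw [hθ]; field_simp, neg_mul, hθβ, one_div_div] at hH
  simp only [ENNReal.rpow_one] at hH
  calc (1 : ℝ≥0∞) = 1 ^ (1 + β) := (ENNReal.one_rpow _).symm
    _ ≤ ((∫⁻ x, f x ∂μ) ^ θ * (∫⁻ x, f x ^ (-β) ∂μ) ^ (1 / (1 + β))) ^ (1 + β) :=
        ENNReal.rpow_le_rpow hH hβ₁.le
    _ = (∫⁻ x, f x ∂μ) ^ β * ∫⁻ x, f x ^ (-β) ∂μ := by
        rw [ENNReal.mul_rpow_of_nonneg _ _ hβ₁.le, ← ENNReal.rpow_mul, ← ENNReal.rpow_mul,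
          hθβ, one_div_mul_cancel hβ₁.ne', ENNReal.rpow_one]

end Jensen

theorem ENNReal.div_le_mul_of_le_of_one_le_mul {a b c d : ℝ≥0∞} (hab : a ≤ b)
    (hcd : 1 ≤ c * d) : a / d ≤ b * c :=
  ENNReal.div_le_of_le_mul <| calc
    a ≤ b * 1 := by rwa [mul_one]
    _ ≤ b * (c * d) := by gcongr
    _ = b * c * d := (mul_assoc _ _ _).symm

theorem ENNReal.mul_rpow_mul_rpow_rearrange {a₁ m₁ a₂ m₂ : ℝ≥0∞} {θ β : ℝ} (hθ : 0 ≤ θ)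
    (hβ : 0 ≤ β) :
    m₂ ^ β * a₁ ^ θ * (m₁ ^ θ * a₂ ^ β) = (a₁ * m₁) ^ θ * (a₂ * m₂) ^ β := by
  rw [ENNReal.mul_rpow_of_nonneg _ _ hθ, ENNReal.mul_rpow_of_nonneg _ _ hβ]
  ring

section WeightBounds

variable {Ω : Type*} [MeasurableSpace Ω] {μ : Measure Ω} {w w₁ w₂ : Ω → ℝ≥0∞} {θ p : ℝ}

theorem ae_rpow_neg_le_essSup_inv_rpow (w : Ω → ℝ≥0∞) {γ : ℝ} (hγ : 0 ≤ γ) :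
    ∀ᵐ x ∂μ, w x ^ (-γ) ≤ essSup (fun x => (w x)⁻¹) μ ^ γ := by
  filter_upwards [ENNReal.ae_le_essSup (fun x => (w x)⁻¹)] with x hx
  rw [ENNReal.rpow_neg, ← ENNReal.inv_rpow]
  exact ENNReal.rpow_le_rpow hx hγ

theorem essSup_inv_rpow_le (w : Ω → ℝ≥0∞) (hθ : 0 ≤ θ) :
    essSup (fun x => (w x ^ θ)⁻¹) μ ≤ essSup (fun x => (w x)⁻¹) μ ^ θ :=
  essSup_le_of_ae_le _ <| (ae_rpow_neg_le_essSup_inv_rpow w hθ).mono fun x hx => by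
    rwa [ENNReal.rpow_neg] at hx

theorem essSup_rpow_one_sub_le (w : Ω → ℝ≥0∞) (hp : 1 ≤ p) :
    essSup (fun x => w x ^ (1 - p)) μ ≤ essSup (fun x => (w x)⁻¹) μ ^ (p - 1) :=
  essSup_le_of_ae_le _ <| (ae_rpow_neg_le_essSup_inv_rpow w (sub_nonneg.2 hp)).mono
    fun x hx => by rwa [neg_sub] at hx

theorem rpow_lintegral_weight_rpow_le (hw₁ : AEMeasurable w₁ μ) {s : ℝ} (hs : 0 < s)
    (hp : 1 ≤ p) :
    (∫⁻ x, (w₁ x ^ s⁻¹ * w₂ x ^ (1 - p)) ^ s ∂μ) ^ (1 / s) ≤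
      essSup (fun x => (w₂ x)⁻¹) μ ^ (p - 1) * (∫⁻ x, w₁ x ∂μ) ^ s⁻¹ := by
  set m₂ := essSup (fun x => (w₂ x)⁻¹) μ
  have hpointwise : ∀ᵐ x ∂μ, (w₁ x ^ s⁻¹ * w₂ x ^ (1 - p)) ^ s ≤ (m₂ ^ (p - 1)) ^ s * w₁ x := by
    filter_upwards [ae_rpow_neg_le_essSup_inv_rpow (μ := μ) w₂ (sub_nonneg.2 hp)] with x hx
    rw [ENNReal.mul_rpow_of_nonneg _ _ hs.le, ← ENNReal.rpow_mul, inv_mul_cancel₀ hs.ne',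
      ENNReal.rpow_one, mul_comm, ← neg_sub p 1]
    gcongr
  calc (∫⁻ x, (w₁ x ^ s⁻¹ * w₂ x ^ (1 - p)) ^ s ∂μ) ^ (1 / s)
      ≤ ((m₂ ^ (p - 1)) ^ s * ∫⁻ x, w₁ x ∂μ) ^ (1 / s) := by
        rw [← lintegral_const_mul'' _ hw₁]
        gcongr ?_ ^ _
        exact lintegral_mono_ae hpointwise
    _ = m₂ ^ (p - 1) * (∫⁻ x, w₁ x ∂μ) ^ s⁻¹ := by
        rw [ENNReal.mul_rpow_of_nonneg _ _ (by positivity), ← ENNReal.rpow_mul,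
          mul_one_div_cancel hs.ne', ENNReal.rpow_one, one_div]

theorem lintegral_weight_rpow_neg_le (hw₂ : AEMeasurable w₂ μ)
    (hw₁_pos : ∀ᵐ x ∂μ, 0 < w₁ x ∧ w₁ x < ∞) (hw₂_pos : ∀ᵐ x ∂μ, 0 < w₂ x ∧ w₂ x < ∞)
    (hθ : 0 ≤ θ) (hp : 1 < p) :
    ∫⁻ x, (w₁ x ^ θ * w₂ x ^ (1 - p)) ^ (-(1 / (p - 1))) ∂μ ≤
      essSup (fun x => (w₁ x)⁻¹) μ ^ (θ / (p - 1)) * ∫⁻ x, w₂ x ∂μ := by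
  have hp₁ : 0 < p - 1 := sub_pos.2 hp
  rw [← lintegral_const_mul'' _ hw₂]
  refine lintegral_mono_ae ?_
  filter_upwards [ae_rpow_neg_le_essSup_inv_rpow (μ := μ) w₁ (div_nonneg hθ hp₁.le), hw₁_pos,
    hw₂_pos] with x hx hx₁ hx₂
  have hw₂_rpow : w₂ x ^ (1 - p) ≠ ∞ := ENNReal.rpow_ne_top_of_ne_zero hx₂.1.ne' hx₂.2.ne
  rw [ENNReal.mul_rpow_of_ne_top (ENNReal.rpow_ne_top_of_nonneg hθ hx₁.2.ne) hw₂_rpow,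
    ← ENNReal.rpow_mul, ← ENNReal.rpow_mul, show (1 - p) * -(1 / (p - 1)) = 1 by field_simp; ring,
    ENNReal.rpow_one, show θ * -(1 / (p - 1)) = -(θ / (p - 1)) by ring]
  gcongr

end WeightBounds

def a1Char {Ω : Type*} [MeasurableSpace Ω] (μ : Measure Ω) (w : Ω → ℝ≥0∞) : ℝ≥0∞ :=
  (∫⁻ x, w x ∂μ) * essSup (fun x => (w x)⁻¹) μ

section ProbabilityWeightBounds

variable {Ω : Type*} [MeasurableSpace Ω] {μ : Measure Ω} [IsProbabilityMeasure μ]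
  {w w₁ w₂ : Ω → ℝ≥0∞} {θ p : ℝ}

theorem lintegral_weight_le (hw₁ : AEMeasurable w₁ μ) (hθ₀ : 0 ≤ θ) (hθ₁ : θ ≤ 1)
    (hp : 1 ≤ p) :
    ∫⁻ x, w₁ x ^ θ * w₂ x ^ (1 - p) ∂μ ≤
      essSup (fun x => (w₂ x)⁻¹) μ ^ (p - 1) * (∫⁻ x, w₁ x ∂μ) ^ θ :=
  calc ∫⁻ x, w₁ x ^ θ * w₂ x ^ (1 - p) ∂μ
      ≤ ∫⁻ x, essSup (fun x => (w₂ x)⁻¹) μ ^ (p - 1) * w₁ x ^ θ ∂μ := by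
        refine lintegral_mono_ae ?_
        filter_upwards [ae_rpow_neg_le_essSup_inv_rpow (μ := μ) w₂ (sub_nonneg.2 hp)] with x hx
        rw [mul_comm, ← neg_sub p 1]
        gcongr
    _ = essSup (fun x => (w₂ x)⁻¹) μ ^ (p - 1) * ∫⁻ x, w₁ x ^ θ ∂μ :=
        lintegral_const_mul'' _ (hw₁.pow_const θ)
    _ ≤ _ := by gcongr; exact lintegral_rpow_le_rpow_lintegral hw₁ hθ₀ hθ₁

theorem one_le_mul_lintegral_weight (hw₁ : AEMeasurable w₁ μ) (hw₂ : AEMeasurable w₂ μ)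
    (hw₁_pos : ∀ᵐ x ∂μ, 0 < w₁ x ∧ w₁ x < ∞) (hw₂_pos : ∀ᵐ x ∂μ, 0 < w₂ x ∧ w₂ x < ∞)
    (hθ : 0 ≤ θ) (hp : 1 ≤ p) :
    1 ≤ essSup (fun x => (w₁ x)⁻¹) μ ^ θ * (∫⁻ x, w₂ x ∂μ) ^ (p - 1) *
      ∫⁻ x, w₁ x ^ θ * w₂ x ^ (1 - p) ∂μ := by
  set m₁ := essSup (fun x => (w₁ x)⁻¹) μ
  have hw₁_lower : ∀ᵐ x ∂μ, 1 ≤ m₁ ^ θ * w₁ x ^ θ := by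
    filter_upwards [ENNReal.ae_le_essSup (fun x => (w₁ x)⁻¹), hw₁_pos] with x hx hx₁
    rw [← ENNReal.mul_rpow_of_nonneg _ _ hθ, ← ENNReal.one_rpow θ, mul_comm]
    exact ENNReal.rpow_le_rpow
      ((ENNReal.inv_le_iff_le_mul (fun _ => hx₁.1.ne') (fun h => absurd h hx₁.2.ne)).1 hx) hθ
  calc 1 ≤ (∫⁻ x, w₂ x ∂μ) ^ (p - 1) * ∫⁻ x, w₂ x ^ (1 - p) ∂μ := by
        simpa only [neg_sub] using
          one_le_rpow_lintegral_mul_lintegral_rpow_neg hw₂ hw₂_pos (sub_nonneg.2 hp)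
    _ ≤ (∫⁻ x, w₂ x ∂μ) ^ (p - 1) * ∫⁻ x, m₁ ^ θ * (w₁ x ^ θ * w₂ x ^ (1 - p)) ∂μ := by
        gcongr (∫⁻ x, w₂ x ∂μ) ^ (p - 1) * ?_
        refine lintegral_mono_ae ?_
        filter_upwards [hw₁_lower] with x hx
        calc w₂ x ^ (1 - p) = 1 * w₂ x ^ (1 - p) := (one_mul _).symm
          _ ≤ m₁ ^ θ * w₁ x ^ θ * w₂ x ^ (1 - p) := by gcongr
          _ = _ := mul_assoc _ _ _
    _ = m₁ ^ θ * (∫⁻ x, w₂ x ∂μ) ^ (p - 1) * ∫⁻ x, w₁ x ^ θ * w₂ x ^ (1 - p) ∂μ := by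
        rw [lintegral_const_mul'' _ (by fun_prop)]
        ring

theorem a1Char_rpow_le (hw : AEMeasurable w μ) (hθ₀ : 0 ≤ θ) (hθ₁ : θ ≤ 1) :
    a1Char μ (fun x => w x ^ θ) ≤ a1Char μ w ^ θ := by
  rw [a1Char, a1Char, ENNReal.mul_rpow_of_nonneg _ _ hθ₀]
  exact mul_le_mul' (lintegral_rpow_le_rpow_lintegral hw hθ₀ hθ₁) (essSup_inv_rpow_le w hθ₀)

theorem lintegral_weight_mul_rpow_le (hw₁ : AEMeasurable w₁ μ) (hw₂ : AEMeasurable w₂ μ)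
    (hw₁_pos : ∀ᵐ x ∂μ, 0 < w₁ x ∧ w₁ x < ∞) (hw₂_pos : ∀ᵐ x ∂μ, 0 < w₂ x ∧ w₂ x < ∞)
    (hθ₀ : 0 ≤ θ) (hθ₁ : θ ≤ 1) (hp : 1 < p) :
    (∫⁻ x, w₁ x ^ θ * w₂ x ^ (1 - p) ∂μ) *
        (∫⁻ x, (w₁ x ^ θ * w₂ x ^ (1 - p)) ^ (-(1 / (p - 1))) ∂μ) ^ (p - 1) ≤
      a1Char μ w₁ ^ θ * a1Char μ w₂ ^ (p - 1) := by
  have hp₁ : 0 < p - 1 := sub_pos.2 hp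
  calc _ ≤ essSup (fun x => (w₂ x)⁻¹) μ ^ (p - 1) * (∫⁻ x, w₁ x ∂μ) ^ θ *
          (essSup (fun x => (w₁ x)⁻¹) μ ^ (θ / (p - 1)) * ∫⁻ x, w₂ x ∂μ) ^ (p - 1) := by
        gcongr
        · exact lintegral_weight_le hw₁ hθ₀ hθ₁ hp.le
        · exact lintegral_weight_rpow_neg_le hw₂ hw₁_pos hw₂_pos hθ₀ hp
    _ = _ := by
        rw [ENNReal.mul_rpow_of_nonneg _ _ hp₁.le, ← ENNReal.rpow_mul,
          div_mul_cancel₀ θ hp₁.ne', ENNReal.mul_rpow_mul_rpow_rearrange hθ₀ hp₁.le, a1Char,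
          a1Char]

theorem rpow_lintegral_weight_rpow_div_le (hw₁ : AEMeasurable w₁ μ) (hw₂ : AEMeasurable w₂ μ)
    (hw₁_pos : ∀ᵐ x ∂μ, 0 < w₁ x ∧ w₁ x < ∞) (hw₂_pos : ∀ᵐ x ∂μ, 0 < w₂ x ∧ w₂ x < ∞)
    {s : ℝ} (hs : 1 ≤ s) (hp : 1 ≤ p) :
    (∫⁻ x, (w₁ x ^ s⁻¹ * w₂ x ^ (1 - p)) ^ s ∂μ) ^ (1 / s) /
        ∫⁻ x, w₁ x ^ s⁻¹ * w₂ x ^ (1 - p) ∂μ ≤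
      a1Char μ w₁ ^ s⁻¹ * a1Char μ w₂ ^ (p - 1) := by
  have hs₀ : 0 < s := by linarith
  have hθ₀ : 0 ≤ s⁻¹ := inv_nonneg.2 hs₀.le
  rw [a1Char, a1Char, ← ENNReal.mul_rpow_mul_rpow_rearrange hθ₀ (sub_nonneg.2 hp)]
  exact ENNReal.div_le_mul_of_le_of_one_le_mul (rpow_lintegral_weight_rpow_le hw₁ hs₀ hp)
    (one_le_mul_lintegral_weight hw₁ hw₂ hw₁_pos hw₂_pos hθ₀ hp)

theorem essSup_rpow_one_sub_div_le (hw : AEMeasurable w μ)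
    (hw_pos : ∀ᵐ x ∂μ, 0 < w x ∧ w x < ∞) (hp : 1 ≤ p) :
    essSup (fun x => w x ^ (1 - p)) μ / ∫⁻ x, w x ^ (1 - p) ∂μ ≤ a1Char μ w ^ (p - 1) := by
  rw [a1Char, ENNReal.mul_rpow_of_nonneg _ _ (sub_nonneg.2 hp), mul_comm]
  refine ENNReal.div_le_mul_of_le_of_one_le_mul (essSup_rpow_one_sub_le w hp) ?_
  simpa only [neg_sub] using
    one_le_rpow_lintegral_mul_lintegral_rpow_neg hw hw_pos (sub_nonneg.2 hp)

end ProbabilityWeightBounds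

section Cubes

variable {n : ℕ} {Q : Set (Fin n → ℝ)} {w w₁ w₂ : (Fin n → ℝ) → ℝ≥0∞} {θ p : ℝ}

theorem IsCube.exists_eq_closedBall (hQ : IsCube Q) :
    ∃ c r, 0 < r ∧ Q = Metric.closedBall c r := by
  obtain ⟨c, r, hr, rfl⟩ := hQ
  refine ⟨c, r, hr, Set.ext fun x => ?_⟩
  simp [dist_pi_le_iff hr.le, Real.dist_eq]

theorem IsCube.isProbabilityMeasure_cond (hQ : IsCube Q) :
    IsProbabilityMeasure (volume[|Q]) := by
  obtain ⟨c, r, hr, rfl⟩ := hQ.exists_eq_closedBall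
  exact cond_isProbabilityMeasure_of_finite (Metric.measure_closedBall_pos volume c hr).ne'
    measure_closedBall_lt_top.ne

theorem avgE_eq_lintegral_cond (Q : Set (Fin n → ℝ)) (w : (Fin n → ℝ) → ℝ≥0∞) :
    avgE Q w = ∫⁻ x, w x ∂volume[|Q] := by
  rw [avgE, ProbabilityTheory.cond, lintegral_smul_measure, smul_eq_mul, ENNReal.div_eq_inv_mul]

theorem IsCube.essSup_restrict_eq_cond (hQ : IsCube Q) (f : (Fin n → ℝ) → ℝ≥0∞) :
    essSup f (volume.restrict Q) = essSup f volume[|Q] := by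
  obtain ⟨c, r, -, rfl⟩ := hQ.exists_eq_closedBall
  exact (essSup_ennreal_smul_measure (ENNReal.inv_ne_zero.2 measure_closedBall_lt_top.ne) f).symm

theorem IsCube.a1Char_cond_le_a1Const (hQ : IsCube Q) (w : (Fin n → ℝ) → ℝ≥0∞) :
    a1Char volume[|Q] w ≤ a1Const w := by
  rw [a1Char, ← avgE_eq_lintegral_cond, ← hQ.essSup_restrict_eq_cond]
  exact le_iSup₂ (f := fun Q (_ : IsCube Q) =>
    avgE Q w * essSup (fun x => (w x)⁻¹) (volume.restrict Q)) Q hQ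

theorem IsWeight.ae_cond (hw : IsWeight w) (Q : Set (Fin n → ℝ)) :
    ∀ᵐ x ∂volume[|Q], 0 < w x ∧ w x < ∞ :=
  cond_absolutelyContinuous.ae_le hw.2

theorem a1Const_rpow_le (hw : Measurable w) (hθ₀ : 0 ≤ θ) (hθ₁ : θ ≤ 1) :
    a1Const (fun x => w x ^ θ) ≤ a1Const w ^ θ :=
  iSup₂_le fun Q hQ => by
    have := hQ.isProbabilityMeasure_cond
    rw [avgE_eq_lintegral_cond, hQ.essSup_restrict_eq_cond]
    exact (a1Char_rpow_le hw.aemeasurable hθ₀ hθ₁).trans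
      (ENNReal.rpow_le_rpow (hQ.a1Char_cond_le_a1Const w) hθ₀)

theorem apSup_weight_le (hw₁ : IsWeight w₁) (hw₂ : IsWeight w₂) (hθ₀ : 0 ≤ θ) (hθ₁ : θ ≤ 1)
    (hp : 1 < p) :
    apSup p (fun x => w₁ x ^ θ * w₂ x ^ (1 - p)) ≤ a1Const w₁ ^ θ * a1Const w₂ ^ (p - 1) :=
  iSup₂_le fun Q hQ => by
    have := hQ.isProbabilityMeasure_cond
    simp only [avgE_eq_lintegral_cond]
    refine (lintegral_weight_mul_rpow_le hw₁.1.aemeasurable hw₂.1.aemeasurable (hw₁.ae_cond Q)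
      (hw₂.ae_cond Q) hθ₀ hθ₁ hp).trans ?_
    gcongr <;> exact hQ.a1Char_cond_le_a1Const _

theorem rhConst_weight_le (hw₁ : IsWeight w₁) (hw₂ : IsWeight w₂) {s : ℝ} (hs : 1 ≤ s)
    (hp : 1 ≤ p) :
    rhConst s (fun x => w₁ x ^ s⁻¹ * w₂ x ^ (1 - p)) ≤ a1Const w₁ ^ s⁻¹ * a1Const w₂ ^ (p - 1) :=
  iSup₂_le fun Q hQ => by
    have := hQ.isProbabilityMeasure_cond
    simp only [avgE_eq_lintegral_cond]
    refine (rpow_lintegral_weight_rpow_div_le hw₁.1.aemeasurable hw₂.1.aemeasurable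
      (hw₁.ae_cond Q) (hw₂.ae_cond Q) hs hp).trans ?_
    gcongr <;> exact hQ.a1Char_cond_le_a1Const _

theorem iSup_essSup_rpow_one_sub_div_le (hw : IsWeight w) (hp : 1 ≤ p) :
    ⨆ (Q : Set (Fin n → ℝ)) (_ : IsCube Q),
        essSup (fun x => w x ^ (1 - p)) (volume.restrict Q) / avgE Q (fun x => w x ^ (1 - p)) ≤
      a1Const w ^ (p - 1) :=
  iSup₂_le fun Q hQ => by
    have := hQ.isProbabilityMeasure_cond
    rw [avgE_eq_lintegral_cond, hQ.essSup_restrict_eq_cond]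
    exact (essSup_rpow_one_sub_div_le hw.1.aemeasurable (hw.ae_cond Q) hp).trans
      (ENNReal.rpow_le_rpow (hQ.a1Char_cond_le_a1Const w) (sub_nonneg.2 hp))

end Cubes

theorem apConst_one {n : ℕ} (w : (Fin n → ℝ) → ℝ≥0∞) : apConst 1 w = a1Const w :=
  if_pos rfl

/-- If `1 ≤ p < ∞`, `1 < s ≤ ∞`, and `w₁, w₂ ∈ A_1`, then
`w := w₁^{1/s} w₂^{1-p} ∈ A_p ∩ RH_s` with
`max([w]_{A_p}, [w]_{RH_s}) ≤ [w₁]_{A_1}^{1/s} [w₂]_{A_1}^{p-1}`. -/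
theorem statement3 {n : ℕ} (p : ℝ) (s : ℝ≥0∞) (hp : 1 ≤ p) (hs : 1 < s)
    (w₁ w₂ : (Fin n → ℝ) → ℝ≥0∞) (hw₁ : IsWeight w₁) (hw₂ : IsWeight w₂)
    (hA₁ : apConst 1 w₁ ≠ ∞) (hA₂ : apConst 1 w₂ ≠ ∞) :
    apConst p (fun x => w₁ x ^ (s⁻¹).toReal * w₂ x ^ (1 - p)) ≠ ∞ ∧
    rhConstE s (fun x => w₁ x ^ (s⁻¹).toReal * w₂ x ^ (1 - p)) ≠ ∞ ∧
    max (apConst p (fun x => w₁ x ^ (s⁻¹).toReal * w₂ x ^ (1 - p)))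
        (rhConstE s (fun x => w₁ x ^ (s⁻¹).toReal * w₂ x ^ (1 - p))) ≤
      apConst 1 w₁ ^ (s⁻¹).toReal * apConst 1 w₂ ^ (p - 1) := by
  simp only [apConst_one] at hA₁ hA₂ ⊢
  have hθ₀ : 0 ≤ (s⁻¹).toReal := ENNReal.toReal_nonneg
  have hθ₁ : (s⁻¹).toReal ≤ 1 :=
    ENNReal.toReal_le_of_le_ofReal zero_le_one (by simpa using (ENNReal.inv_lt_one.2 hs).le)
  have hAp : apConst p (fun x => w₁ x ^ (s⁻¹).toReal * w₂ x ^ (1 - p)) ≤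
      a1Const w₁ ^ (s⁻¹).toReal * a1Const w₂ ^ (p - 1) := by
    rcases hp.eq_or_lt with rfl | hp
    · simpa [apConst_one] using a1Const_rpow_le hw₁.1 hθ₀ hθ₁
    · rw [apConst, if_neg hp.ne']
      exact apSup_weight_le hw₁ hw₂ hθ₀ hθ₁ hp
  have hRH : rhConstE s (fun x => w₁ x ^ (s⁻¹).toReal * w₂ x ^ (1 - p)) ≤
      a1Const w₁ ^ (s⁻¹).toReal * a1Const w₂ ^ (p - 1) := by
    rcases eq_or_ne s ∞ with rfl | hs_top
    · simpa [rhConstE] using iSup_essSup_rpow_one_sub_div_le hw₂ hp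
    · rw [rhConstE, if_neg hs_top, ENNReal.toReal_inv]
      exact rhConst_weight_le hw₁ hw₂ (by simpa using ENNReal.toReal_mono hs_top hs.le) hp
  have hC : a1Const w₁ ^ (s⁻¹).toReal * a1Const w₂ ^ (p - 1) ≠ ∞ :=
    ENNReal.mul_ne_top (ENNReal.rpow_ne_top_of_nonneg hθ₀ hA₁)
      (ENNReal.rpow_ne_top_of_nonneg (sub_nonneg.2 hp) hA₂)
  exact ⟨ne_top_of_le_ne_top hC hAp, ne_top_of_le_ne_top hC hRH, max_le hAp hRH⟩
end
end

section
/- Let $g_r(t) := \sum_{\ell=0}^m (-1)^\ell \binom{m}{\ell} \frac{\mathbf{1}_{\{t > \ell r^2\}}}{\sqrt{t - \ell r^2}}$ for $r > 0$ and integer $m \ge 1$. Then for every integer $j \ge 1$ and constant $c > 0$ there is a constant $C_m$ (depending only on $m$, $n$, $c$) such that $\int_0^\infty |g_r(t)| \, e^{-4^j r^2/(ct)} \, (r/\sqrt{t})^{n-1} \, \frac{dt}{\sqrt{t}} \le C_m \, 2^{-nj}$. -/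
open MeasureTheory

noncomputable section

/-- The kernel-expansion function `g_r(t) = ∑_{ℓ=0}^m (-1)^ℓ C(m,ℓ) 𝟙_{t > ℓr²}/√(t-ℓr²)`. -/
def gFun (m : ℕ) (r t : ℝ) : ℝ :=
  ∑ ℓ ∈ Finset.range (m + 1),
    (-1 : ℝ) ^ ℓ * (m.choose ℓ) * (if (ℓ : ℝ) * r ^ 2 < t then (Real.sqrt (t - ℓ * r ^ 2))⁻¹ else 0)

open Real Set Nat

/-!
Substituting `t = r²τ` removes `r`: `g_r(r²τ) = g_1(τ)/r`, and the integral becomes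
`∫₀^∞ |g_1(τ)| e^{-α/τ} τ^{-n/2} dτ` with `α = 4^j/c`. Since `u^{n/2} e^{-u}` is bounded, the weight
is at most `C_n α^{-n/2} = C_n c^{n/2} 2^{-nj}`, so it remains to see that `g_1` is integrable.
Near the points `τ = ℓ` it has square-root singularities. For `τ > m`, writing
`1/√b = π^{-1/2} ∫₀^∞ s^{-1/2} e^{-bs} ds` turns the alternating sum into
`π^{-1/2} ∫₀^∞ s^{-1/2} e^{-τs} (1 - e^s)^m ds`, and `|1 - e^s|^m ≤ s^m e^{ms}` bounds this by
`Γ(m + 1/2) π^{-1/2} (τ - m)^{-m-1/2}`, which is integrable at infinity because `m ≥ 1`.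
-/

lemma exp_sub_one_le_mul_exp (x : ℝ) : exp x - 1 ≤ x * exp x := by
  have h := mul_le_mul_of_nonneg_right (add_one_le_exp (-x)) (exp_pos x).le
  rw [← exp_add, neg_add_cancel, exp_zero] at h
  linarith

lemma integrableOn_rpow_mul_exp_neg_mul {a b : ℝ} (ha : 0 < a) (hb : 0 < b) :
    IntegrableOn (fun s : ℝ => s ^ (a - 1) * exp (-(b * s))) (Ioi 0) := by
  simpa only [rpow_one, neg_mul] using
    integrableOn_rpow_mul_exp_neg_mul_rpow (p := 1) (s := a - 1) (by linarith) one_pos hb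

lemma inv_sqrt_eq_integral {b : ℝ} (hb : 0 < b) :
    (√b)⁻¹ = (√π)⁻¹ * ∫ s in Ioi (0 : ℝ), s ^ ((1 : ℝ) / 2 - 1) * exp (-(b * s)) := by
  rw [integral_rpow_mul_exp_neg_mul_Ioi one_half_pos hb, Gamma_one_half_eq, one_div b,
    ← sqrt_eq_rpow, sqrt_inv]
  field_simp

lemma gFun_eq_integral (m : ℕ) {r t : ℝ} (ht : m * r ^ 2 < t) :
    gFun m r t = (√π)⁻¹ * ∫ s in Ioi (0 : ℝ),
      s ^ ((1 : ℝ) / 2 - 1) * exp (-(t * s)) * (1 - exp (r ^ 2 * s)) ^ m := by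
  have hlt : ∀ ℓ ∈ Finset.range (m + 1), (ℓ : ℝ) * r ^ 2 < t := fun ℓ hℓ =>
    lt_of_le_of_lt (mul_le_mul_of_nonneg_right
      (by exact_mod_cast Finset.mem_range_succ_iff.mp hℓ) (sq_nonneg r)) ht
  have hint : ∀ ℓ ∈ Finset.range (m + 1), IntegrableOn (fun s : ℝ =>
      (-1 : ℝ) ^ ℓ * (m.choose ℓ) * (s ^ ((1 : ℝ) / 2 - 1) * exp (-((t - ℓ * r ^ 2) * s))))
      (Ioi 0) := fun ℓ hℓ =>
    (integrableOn_rpow_mul_exp_neg_mul one_half_pos (by linarith [hlt ℓ hℓ])).const_mul _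
  have hbinom : ∀ s : ℝ, ∑ ℓ ∈ Finset.range (m + 1), (-1 : ℝ) ^ ℓ * (m.choose ℓ) *
      (s ^ ((1 : ℝ) / 2 - 1) * exp (-((t - ℓ * r ^ 2) * s)))
      = s ^ ((1 : ℝ) / 2 - 1) * exp (-(t * s)) * (1 - exp (r ^ 2 * s)) ^ m := fun s => by
    rw [sub_eq_neg_add (1 : ℝ), add_pow, Finset.mul_sum]
    refine Finset.sum_congr rfl fun ℓ _ => ?_
    rw [show -((t - ℓ * r ^ 2) * s) = -(t * s) + ℓ * (r ^ 2 * s) by ring, exp_add, exp_nat_mul,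
      neg_pow]
    ring
  calc gFun m r t = ∑ ℓ ∈ Finset.range (m + 1), (-1 : ℝ) ^ ℓ * (m.choose ℓ) *
        ((√π)⁻¹ * ∫ s in Ioi (0 : ℝ),
          s ^ ((1 : ℝ) / 2 - 1) * exp (-((t - ℓ * r ^ 2) * s))) :=
        Finset.sum_congr rfl fun ℓ hℓ => by
          rw [if_pos (hlt ℓ hℓ), inv_sqrt_eq_integral (by linarith [hlt ℓ hℓ])]
    _ = _ := by
        simp_rw [← hbinom, integral_finsetSum _ hint, Finset.mul_sum, integral_const_mul]
        exact Finset.sum_congr rfl fun _ _ => by ring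

lemma abs_rpow_mul_exp_mul_one_sub_exp_pow_le (m : ℕ) (t : ℝ) {a s : ℝ} (ha : 0 ≤ a)
    (hs : 0 < s) :
    |s ^ ((1 : ℝ) / 2 - 1) * exp (-(t * s)) * (1 - exp (a * s)) ^ m|
      ≤ a ^ m * (s ^ ((m + 1 / 2 : ℝ) - 1) * exp (-((t - m * a) * s))) := by
  have hexp : 0 ≤ exp (a * s) - 1 := by linarith [one_le_exp (mul_nonneg ha hs.le)]
  have hpow : |1 - exp (a * s)| ^ m ≤ (a * s * exp (a * s)) ^ m := by
    rw [abs_sub_comm, abs_of_nonneg hexp]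
    exact pow_le_pow_left₀ hexp (exp_sub_one_le_mul_exp _) m
  calc _ = s ^ ((1 : ℝ) / 2 - 1) * exp (-(t * s)) * |1 - exp (a * s)| ^ m := by
        rw [abs_mul, abs_mul, abs_pow, abs_of_pos (exp_pos _), abs_of_pos (rpow_pos_of_pos hs _)]
    _ ≤ s ^ ((1 : ℝ) / 2 - 1) * exp (-(t * s)) * (a * s * exp (a * s)) ^ m := by gcongr
    _ = _ := by
        rw [show (m + 1 / 2 : ℝ) - 1 = (1 / 2 - 1) + m by ring, rpow_add hs, rpow_natCast,
          show -((t - m * a) * s) = -(t * s) + m * (a * s) by ring, exp_add, exp_nat_mul]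
        ring

lemma abs_gFun_le_of_lt (m : ℕ) {r t : ℝ} (ht : m * r ^ 2 < t) :
    |gFun m r t| ≤
      (√π)⁻¹ * Gamma (m + 1 / 2) * (r ^ 2) ^ m * (t - m * r ^ 2) ^ (-(m + 1 / 2 : ℝ)) := by
  have hb : 0 < t - m * r ^ 2 := by linarith
  rw [gFun_eq_integral m ht, abs_mul, abs_of_pos (by positivity)]
  calc (√π)⁻¹ * |∫ s in Ioi (0 : ℝ),
        s ^ ((1 : ℝ) / 2 - 1) * exp (-(t * s)) * (1 - exp (r ^ 2 * s)) ^ m|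
      ≤ (√π)⁻¹ * ∫ s in Ioi (0 : ℝ),
          (r ^ 2) ^ m * (s ^ ((m + 1 / 2 : ℝ) - 1) * exp (-((t - m * r ^ 2) * s))) := by
        gcongr
        refine abs_integral_le_integral_abs.trans (integral_mono_of_nonneg
          (ae_of_all _ fun s => abs_nonneg _)
          ((integrableOn_rpow_mul_exp_neg_mul (by positivity) hb).const_mul _) ?_)
        filter_upwards [ae_restrict_mem measurableSet_Ioi] with s hs
        exact abs_rpow_mul_exp_mul_one_sub_exp_pow_le m t (sq_nonneg r) hs
    _ = _ := by
        rw [integral_const_mul, integral_rpow_mul_exp_neg_mul_Ioi (by positivity) hb, one_div,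
          inv_rpow hb.le, ← rpow_neg hb.le]
        ring

def gMajorant (m : ℕ) (τ : ℝ) : ℝ :=
  ∑ ℓ ∈ Finset.range (m + 1),
      (m.choose ℓ : ℝ) * (Ioc 0 ((m : ℝ) + 1)).indicator (· ^ (-(1 / 2) : ℝ)) (τ - ℓ)
    + (√π)⁻¹ * Gamma (m + 1 / 2) * (Ioi 1).indicator (· ^ (-(m + 1 / 2) : ℝ)) (τ - m)

lemma abs_gFun_one_le_gMajorant (m : ℕ) (τ : ℝ) : |gFun m 1 τ| ≤ gMajorant m τ := by
  have hlocal : 0 ≤ ∑ ℓ ∈ Finset.range (m + 1),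
      (m.choose ℓ : ℝ) * (Ioc 0 ((m : ℝ) + 1)).indicator (· ^ (-(1 / 2) : ℝ)) (τ - ℓ) :=
    Finset.sum_nonneg fun ℓ _ => mul_nonneg (Nat.cast_nonneg _)
      (indicator_nonneg (fun v hv => rpow_nonneg hv.1.le _) _)
  have htail :
      0 ≤ (√π)⁻¹ * Gamma (m + 1 / 2) * (Ioi 1).indicator (· ^ (-(m + 1 / 2) : ℝ)) (τ - m) :=
    mul_nonneg (by positivity)
      (indicator_nonneg (fun v hv => rpow_nonneg (zero_le_one.trans hv.le) _) _)
  rw [gMajorant]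
  rcases le_or_gt τ (m + 1) with hτ | hτ
  · refine le_add_of_le_of_nonneg ?_ htail
    refine (Finset.abs_sum_le_sum_abs _ _).trans (Finset.sum_le_sum fun ℓ hℓ => ?_)
    rw [abs_mul, abs_mul, abs_pow, abs_neg, abs_one, one_pow, one_mul, Nat.abs_cast]
    gcongr
    simp only [one_pow, mul_one]
    split_ifs with h
    · rw [indicator_of_mem (show τ - ℓ ∈ Ioc 0 ((m : ℝ) + 1) from
          ⟨by linarith, by linarith [(Nat.cast_nonneg ℓ : (0 : ℝ) ≤ ℓ)]⟩),
        abs_of_nonneg (by positivity), sqrt_eq_rpow, ← rpow_neg (by linarith)]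
    · rw [abs_zero]
      exact indicator_nonneg (fun v hv => rpow_nonneg hv.1.le _) _
  · refine le_add_of_nonneg_of_le hlocal ?_
    rw [indicator_of_mem (show τ - m ∈ Ioi 1 by simp only [mem_Ioi]; linarith)]
    simpa using abs_gFun_le_of_lt m (r := 1) (t := τ) (by simp only [one_pow, mul_one]; linarith)

lemma integrable_gMajorant {m : ℕ} (hm : 1 ≤ m) : Integrable (gMajorant m) := by
  have hlocal : Integrable ((Ioc 0 ((m : ℝ) + 1)).indicator (· ^ (-(1 / 2) : ℝ))) := by
    rw [integrable_indicator_iff measurableSet_Ioc,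
      ← intervalIntegrable_iff_integrableOn_Ioc_of_le (by positivity)]
    exact intervalIntegral.intervalIntegrable_rpow' (by norm_num)
  have htail : Integrable ((Ioi (1 : ℝ)).indicator (· ^ (-(m + 1 / 2) : ℝ))) := by
    rw [integrable_indicator_iff measurableSet_Ioi]
    have : (1 : ℝ) ≤ m := by exact_mod_cast hm
    exact integrableOn_Ioi_rpow_of_lt (by linarith) one_pos
  exact (integrable_finsetSum _ fun ℓ _ => (hlocal.comp_sub_right _).const_mul _).add
    ((htail.comp_sub_right _).const_mul _)

lemma rpow_half_mul_exp_neg_le (n : ℕ) {u : ℝ} (hu : 0 ≤ u) :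
    u ^ ((n : ℝ) / 2) * exp (-u) ≤ √(n ! / 2 ^ n) := by
  rw [le_sqrt (by positivity) (by positivity)]
  have h := pow_div_factorial_le_exp (2 * u) (by positivity) n
  rw [div_le_iff₀ (by positivity)] at h
  calc (u ^ ((n : ℝ) / 2) * exp (-u)) ^ 2 = (2 * u) ^ n / exp (2 * u) / 2 ^ n := by
        rw [mul_pow, ← rpow_mul_natCast hu, show (n : ℝ) / 2 * (2 : ℕ) = n by push_cast; ring,
          rpow_natCast, ← exp_nat_mul, show ((2 : ℕ) : ℝ) * -u = -(2 * u) by push_cast; ring,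
          exp_neg, mul_pow]
        field_simp
    _ ≤ n ! / 2 ^ n := by
        gcongr
        rw [div_le_iff₀ (exp_pos _)]
        linarith

lemma exp_neg_div_mul_rpow_le (n : ℕ) {α τ : ℝ} (hα : 0 < α) (hτ : 0 < τ) :
    exp (-(α / τ)) * τ ^ (-((n : ℝ) / 2)) ≤ √(n ! / 2 ^ n) * α ^ (-((n : ℝ) / 2)) := by
  have key : τ ^ (-((n : ℝ) / 2)) = (α / τ) ^ ((n : ℝ) / 2) * α ^ (-((n : ℝ) / 2)) := by
    rw [div_rpow hα.le hτ.le, rpow_neg hα.le, rpow_neg hτ.le]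
    have : 0 < α ^ ((n : ℝ) / 2) := by positivity
    field_simp
  calc _ = (α / τ) ^ ((n : ℝ) / 2) * exp (-(α / τ)) * α ^ (-((n : ℝ) / 2)) := by
        rw [key]; ring
    _ ≤ _ := by gcongr; exact rpow_half_mul_exp_neg_le n (by positivity)

lemma gFun_sq_mul (m : ℕ) {r : ℝ} (hr : 0 < r) (τ : ℝ) :
    gFun m r (r ^ 2 * τ) = r⁻¹ * gFun m 1 τ := by
  simp only [gFun, one_pow, mul_one, Finset.mul_sum]
  refine Finset.sum_congr rfl fun ℓ _ => ?_
  have hiff : (ℓ : ℝ) * r ^ 2 < r ^ 2 * τ ↔ (ℓ : ℝ) < τ := by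
    rw [mul_comm]; exact mul_lt_mul_iff_right₀ (by positivity)
  simp only [hiff]
  split_ifs
  · rw [show r ^ 2 * τ - ℓ * r ^ 2 = r ^ 2 * (τ - ℓ) by ring, sqrt_mul (by positivity),
      sqrt_sq hr.le, mul_inv]
    ring
  · simp

lemma inv_sqrt_rpow {τ : ℝ} (hτ : 0 < τ) (x : ℝ) : (√τ)⁻¹ ^ x = τ ^ (-(x / 2)) := by
  rw [sqrt_eq_rpow, inv_rpow (by positivity), ← rpow_mul hτ.le, ← rpow_neg hτ.le]
  ring_nf

lemma integral_abs_gFun_mul_weight_eq (n m : ℕ) (a c : ℝ) {r : ℝ} (hr : 0 < r) :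
    ∫ t in Ioi (0 : ℝ),
        |gFun m r t| * exp (-(a * r ^ 2) / (c * t)) * (r / √t) ^ ((n : ℝ) - 1) / √t
      = ∫ τ in Ioi (0 : ℝ), |gFun m 1 τ| * (exp (-(a / c / τ)) * τ ^ (-((n : ℝ) / 2))) := by
  have hr2 : 0 < r ^ 2 := by positivity
  have h := integral_comp_mul_left_Ioi' (fun t => |gFun m r t| * exp (-(a * r ^ 2) / (c * t)) *
    (r / √t) ^ ((n : ℝ) - 1) / √t) 0 hr2
  rw [mul_zero] at h
  rw [← h, smul_eq_mul, ← integral_const_mul]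
  refine setIntegral_congr_fun measurableSet_Ioi fun τ (hτ : 0 < τ) => ?_
  have hsqrt : √(r ^ 2 * τ) = r * √τ := by rw [sqrt_mul hr2.le, sqrt_sq hr.le]
  rw [gFun_sq_mul m hr, hsqrt, abs_mul, abs_of_pos (inv_pos.mpr hr),
    show r / (r * √τ) = (√τ)⁻¹ by field_simp, rpow_sub_one (by positivity),
    inv_sqrt_rpow hτ,
    show -(a * r ^ 2) / (c * (r ^ 2 * τ)) = -(a / c / τ) by field_simp]
  field_simp

lemma four_pow_div_rpow_neg_half (n j : ℕ) {c : ℝ} (hc : 0 < c) :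
    ((4 : ℝ) ^ j / c) ^ (-((n : ℝ) / 2)) =
      c ^ ((n : ℝ) / 2) * (2 : ℝ) ^ (-(n : ℝ) * j) := by
  rw [div_rpow (by positivity) hc.le, rpow_neg (by positivity), rpow_neg hc.le, inv_div_inv,
    show (4 : ℝ) ^ j = (2 : ℝ) ^ ((2 * j : ℕ) : ℝ) by rw [rpow_natCast, pow_mul]; norm_num,
    ← rpow_mul (by norm_num), div_eq_mul_inv, ← rpow_neg (by norm_num)]
  push_cast
  ring_nf

/-- For every `m ≥ 1`, `n`, and `c > 0` there is a constant `C_m` such that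
for all `r > 0` and integers `j ≥ 1`,
`∫₀^∞ |g_r(t)| e^{-4^j r²/(ct)} (r/√t)^{n-1} dt/√t ≤ C_m 2^{-nj}`. -/
theorem statement13 (n m : ℕ) (hm : 1 ≤ m) (c : ℝ) (hc : 0 < c) :
    ∃ C : ℝ, 0 < C ∧ ∀ (r : ℝ) (j : ℕ), 0 < r → 1 ≤ j →
      (∫ t in Set.Ioi (0 : ℝ),
          |gFun m r t| * Real.exp (-((4 : ℝ) ^ j * r ^ 2) / (c * t)) *
            (r / Real.sqrt t) ^ ((n : ℝ) - 1) / Real.sqrt t) ≤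
        C * (2 : ℝ) ^ (-(n : ℝ) * j) := by
  set I := ∫ τ in Ioi (0 : ℝ), gMajorant m τ
  have hI : 0 ≤ I := setIntegral_nonneg measurableSet_Ioi fun τ _ =>
    (abs_nonneg _).trans (abs_gFun_one_le_gMajorant m τ)
  refine ⟨√(n ! / 2 ^ n) * c ^ ((n : ℝ) / 2) * (I + 1), by positivity, fun r j hr _ => ?_⟩
  have hα : 0 < (4 : ℝ) ^ j / c := by positivity
  rw [integral_abs_gFun_mul_weight_eq n m _ c hr]
  calc _ ≤ ∫ τ in Ioi (0 : ℝ),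
          gMajorant m τ * (√(n ! / 2 ^ n) * ((4 : ℝ) ^ j / c) ^ (-((n : ℝ) / 2))) := by
        refine integral_mono_of_nonneg ?_ ((integrable_gMajorant hm).integrableOn.mul_const _) ?_
          <;> filter_upwards [ae_restrict_mem measurableSet_Ioi] with τ (hτ : 0 < τ)
        · positivity
        · exact mul_le_mul (abs_gFun_one_le_gMajorant m τ) (exp_neg_div_mul_rpow_le n hα hτ)
            (by positivity) ((abs_nonneg _).trans (abs_gFun_one_le_gMajorant m τ))
    _ = √(n ! / 2 ^ n) * c ^ ((n : ℝ) / 2) * I * (2 : ℝ) ^ (-(n : ℝ) * j) := by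
        rw [integral_mul_const, four_pow_div_rpow_neg_half n j hc]
        ring
    _ ≤ _ := by gcongr; linarith
end
end
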